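/- Let F be a field, p a prime, M/F finite Galois, H a Sylow p-subgroup of Gal(M/F) with fixed field K, and L an intermediate field of M/F with [L:F] = p such that M is the normal closure of L over F. Then M = KL, the compositum of K and L. -/

import Mathlib

/-!
`Gal(M/F)` acts faithfully on the `p` embeddings `L → M`, because `M` is generated by their
images. Hence `|Gal(M/F)| = p · [M : L]` divides `p!`, so `p ∤ [M : L] = |Gal(M/L)|`, and a Sylow
`p`-subgroup `H` meets `Gal(M/L)` trivially. By the Galois correspondence the subgroup fixing
`M^H ⊔ L` is `H ∩ Gal(M/L) = 1`, so `M^H ⊔ L = M`.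
-/

open scoped TensorProduct
universe u

/-- A finite-dimensional `F`-algebra is *split* if it is a matrix algebra over `F`. -/
def IsSplit (F : Type u) [Field F] (A : Type u) [Ring A] [Algebra F A] : Prop :=
  ∃ n : ℕ, 0 < n ∧ Nonempty (A ≃ₐ[F] Matrix (Fin n) (Fin n) F)

/-- Brauer equivalence of two `F`-algebras. -/
def BrauerEquiv (F : Type u) [Field F] (A B : Type u) [Ring A] [Algebra F A]
    [Ring B] [Algebra F B] : Prop :=
  ∃ n m : ℕ, 0 < n ∧ 0 < m ∧ Nonempty (Matrix (Fin n) (Fin n) A ≃ₐ[F] Matrix (Fin m) (Fin m) B)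

/-- `A` is a finite-dimensional central simple `F`-algebra. -/
def IsCSA (F A : Type u) [Field F] [Ring A] [Algebra F A] : Prop :=
  Algebra.IsCentral F A ∧ IsSimpleRing A ∧ FiniteDimensional F A

/-- The `n`-fold tensor power of an `F`-algebra. -/
abbrev tpow (F : Type u) [Field F] (A : Type u) [Ring A] [Algebra F A] (n : ℕ) : Type u :=
  ⨂[F] _ : Fin n, A

/-- The Brauer class of `A` is killed by `p`: its `p`-th tensor power is split. -/
def IsPTorsion (F : Type u) [Field F] (A : Type u) [Ring A] [Algebra F A] (p : ℕ) : Prop :=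
  IsSplit F (tpow F A p)

/-- The restriction map `Br(F)[p] → Br(E)[p]` along `f : F →+* E` is injective:
two `p`-torsion Brauer classes that agree after scalar extension agree already over `F`. -/
def ResInjP (p : ℕ) (F E : Type u) [Field F] [Field E] (f : F →+* E) : Prop :=
  letI : Algebra F E := f.toAlgebra
  ∀ (A B : Type u) [Ring A] [Algebra F A] [Ring B] [Algebra F B],
    IsCSA F A → IsCSA F B → IsPTorsion F A p → IsPTorsion F B p →
    BrauerEquiv E (E ⊗[F] A) (E ⊗[F] B) → BrauerEquiv F A B

/-- The restriction map `Br(F) → Br(E)` along `f : F →+* E` is injective. -/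
def ResInj (F E : Type u) [Field F] [Field E] (f : F →+* E) : Prop :=
  letI : Algebra F E := f.toAlgebra
  ∀ (A B : Type u) [Ring A] [Algebra F A] [Ring B] [Algebra F B],
    IsCSA F A → IsCSA F B →
    BrauerEquiv E (E ⊗[F] A) (E ⊗[F] B) → BrauerEquiv F A B

/-- `D` is a central division algebra of degree `p` over `K`. -/
def IsCentralDivisionOfDeg (K D : Type u) [Field K] [DivisionRing D] [Algebra K D]
    (p : ℕ) : Prop :=
  Algebra.IsCentral K D ∧ FiniteDimensional K D ∧ Module.finrank K D = p ^ 2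

open IntermediateField Module Nat

variable {F M : Type*} [Field F] [Field M] [Algebra F M]

namespace AlgEquiv

variable (F M) in
def permAlgHom (E : Type*) [Semiring E] [Algebra F E] :
    (M ≃ₐ[F] M) →* Equiv.Perm (E →ₐ[F] M) where
  toFun σ := arrowCongr refl σ
  map_one' := rfl
  map_mul' _ _ := rfl

theorem permAlgHom_injective {L : IntermediateField F M}
    (hM : IntermediateField.normalClosure F L M = ⊤) :
    Function.Injective (permAlgHom F M L) := by
  refine (injective_iff_map_eq_one _).mpr fun σ hσ ↦ ?_
  have hfix : ⊤ ≤ fixedField (Subgroup.zpowers σ) := by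
    rw [← hM, normalClosure_def]
    refine iSup_le fun f ↦ ?_
    rw [le_iff_le, Subgroup.zpowers_le, IntermediateField.mem_fixingSubgroup_iff]
    rintro _ ⟨x, rfl⟩
    exact DFunLike.congr_fun (Equiv.congr_fun hσ f) x
  rwa [le_iff_le, fixingSubgroup_top, le_bot_iff, Subgroup.zpowers_eq_bot] at hfix

end AlgEquiv

theorem IntermediateField.natCard_algHom_of_normal [Normal F M] (L : IntermediateField F M)
    [FiniteDimensional F L] [Algebra.IsSeparable F L] :
    Nat.card (L →ₐ[F] M) = finrank F L :=
  AlgHom.natCard_of_splits F L M fun x ↦ by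
    rw [← minpoly.algebraMap_eq (algebraMap L M).injective x]
    exact Normal.splits inferInstance _

theorem IsGalois.natCard_dvd_factorial_finrank [FiniteDimensional F M] [IsGalois F M]
    {L : IntermediateField F M} (hM : IntermediateField.normalClosure F L M = ⊤) :
    Nat.card (M ≃ₐ[F] M) ∣ (finrank F L)! := by
  have := Subgroup.card_dvd_of_injective _ (AlgEquiv.permAlgHom_injective hM)
  rwa [Nat.card_perm, natCard_algHom_of_normal] at this

theorem Nat.Prime.not_dvd_of_mul_dvd_factorial {p n : ℕ} (hp : p.Prime) (h : p * n ∣ p !) :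
    ¬ p ∣ n := by
  rw [← Nat.mul_factorial_pred hp.ne_zero, Nat.mul_dvd_mul_iff_left hp.pos] at h
  exact fun hpn ↦ absurd (hp.dvd_factorial.mp (hpn.trans h)) (by have := hp.pos; omega)

theorem IsGalois.not_dvd_finrank_of_finrank_eq_prime [FiniteDimensional F M] [IsGalois F M]
    {p : ℕ} (hp : p.Prime) {L : IntermediateField F M} (hL : finrank F L = p)
    (hM : IntermediateField.normalClosure F L M = ⊤) : ¬ p ∣ finrank L M := by
  have := natCard_dvd_factorial_finrank hM
  rw [IsGalois.card_aut_eq_finrank, ← finrank_mul_finrank F L M, hL] at this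
  exact hp.not_dvd_of_mul_dvd_factorial this

theorem IsGalois.fixedField_sup_eq_top_of_inf_eq_bot [FiniteDimensional F M] [IsGalois F M]
    {H : Subgroup (M ≃ₐ[F] M)} {L : IntermediateField F M} (h : Disjoint H L.fixingSubgroup) :
    fixedField H ⊔ L = ⊤ :=
  calc fixedField H ⊔ L = fixedField (fixedField H ⊔ L).fixingSubgroup :=
        (fixedField_fixingSubgroup _).symm
    _ = ⊤ := by rw [fixingSubgroup_sup, fixingSubgroup_fixedField, h.eq_bot, fixedField_bot]

/-- If `M/F` is finite Galois, `L` an intermediate field with `[L:F] = p`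
whose normal closure is `M`, `H` a Sylow `p`-subgroup of `Gal(M/F)` with fixed field `K`,
then `M = KL`. -/
theorem fixedField_sup_eq_top (p : ℕ) [Fact p.Prime]
    (F M : Type u) [Field F] [Field M] [Algebra F M] [FiniteDimensional F M] [IsGalois F M]
    (L : IntermediateField F M) (hL : Module.finrank F L = p)
    (hM : IntermediateField.normalClosure F L M = ⊤)
    (H : Sylow p (M ≃ₐ[F] M)) :
    IntermediateField.fixedField (H : Subgroup (M ≃ₐ[F] M)) ⊔ L = ⊤ := by
  have hp : p.Prime := Fact.out
  obtain ⟨n, hH⟩ := IsPGroup.iff_card.mp H.isPGroup'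
  have hcop : (Nat.card H).Coprime (Nat.card L.fixingSubgroup) := by
    rw [hH, IsGalois.card_fixingSubgroup_eq_finrank]
    exact (hp.coprime_iff_not_dvd.mpr
      (IsGalois.not_dvd_finrank_of_finrank_eq_prime hp hL hM)).pow_left n
  exact IsGalois.fixedField_sup_eq_top_of_inf_eq_bot (Subgroup.disjoint_of_coprime_natCard hcop)
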